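/- Let $X$ be an elliptic curve and $E$ a semistable algebraic vector bundle on $X$ of degree zero. Then $E$ admits an algebraic connection. -/

import Mathlib

/-!
A direct summand `W'` of `E` has a complement `W''`, and both are subbundles of `E`.
Semistability of the degree-zero bundle `E` forces `deg W' ≤ 0` and `deg W'' ≤ 0`; since
`deg W' + deg W'' = deg E = 0`, both vanish, so the Atiyah–Weil criterion applies.
-/

section Semistable

variable {VB : Type} {deg : VB → ℤ} {rk : VB → ℕ} {Sub Summand : VB → VB → Prop}

def Semistable (deg : VB → ℤ) (rk : VB → ℕ) (Sub : VB → VB → Prop) (E : VB) : Prop :=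
  ∀ F, Sub F E → 0 < rk F → deg F * (rk E : ℤ) ≤ deg E * (rk F : ℤ)

theorem Semistable.deg_nonpos_of_sub {E F : VB} (hE : Semistable deg rk Sub E)
    (hdegE : deg E = 0) (hrkE : 0 < rk E) (hF : Sub F E) (hrkF : 0 < rk F) : deg F ≤ 0 := by
  have hslope := hE F hF hrkF
  rw [hdegE, zero_mul] at hslope
  exact nonpos_of_mul_nonpos_left hslope (by exact_mod_cast hrkE)

theorem Semistable.deg_nonpos_of_summand {E W : VB} (hE : Semistable deg rk Sub E)
    (hdegE : deg E = 0)
    (hsub : ∀ W' W : VB, Summand W' W → Sub W' W)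
    (hcompl : ∀ W' W : VB, Summand W' W → ∃ W'', Summand W'' W ∧
      deg W' + deg W'' = deg W ∧ rk W' + rk W'' = rk W)
    (hrk : ∀ W' W : VB, Summand W' W → 0 < rk W' ∨ deg W' = 0)
    (hW : Summand W E) : deg W ≤ 0 := by
  rcases hrk W E hW with hpos | hzero
  · obtain ⟨_, -, -, hrkE⟩ := hcompl W E hW
    exact hE.deg_nonpos_of_sub hdegE (by omega) (hsub W E hW) hpos
  · exact hzero.le

end Semistable

theorem semistable_degree_zero_admits_connection
    (VB : Type) (deg : VB → ℤ) (rk : VB → ℕ)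
    (Sub : VB → VB → Prop)          -- subbundle relation
    (Conn : VB → Type)              -- algebraic connections
    (Summand : VB → VB → Prop)      -- `Summand W' W` : `W'` is a direct summand of `W`
    -- Atiyah–Weil criterion
    (hAW : ∀ W : VB, (∀ W', Summand W' W → deg W' = 0) → Nonempty (Conn W))
    -- a direct summand is in particular a subbundle
    (hsub : ∀ W' W : VB, Summand W' W → Sub W' W)
    -- a direct summand has a complementary direct summand
    (hcompl : ∀ W' W : VB, Summand W' W → ∃ W'', Summand W'' W ∧
      deg W' + deg W'' = deg W ∧ rk W' + rk W'' = rk W)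
    -- a direct summand is either nonzero or the zero bundle (of degree zero)
    (hrk : ∀ W' W : VB, Summand W' W → 0 < rk W' ∨ deg W' = 0)
    -- the data of the statement: `E` semistable of degree zero
    (E : VB)
    (hss : ∀ F, Sub F E → 0 < rk F → deg F * (rk E : ℤ) ≤ deg E * (rk F : ℤ))
    (hdegE : deg E = 0) :
    Nonempty (Conn E) := by
  have hE : Semistable deg rk Sub E := hss
  refine hAW E fun W' hW' => ?_
  obtain ⟨W'', hW'', hdeg, -⟩ := hcompl W' E hW'
  have h' := hE.deg_nonpos_of_summand hdegE hsub hcompl hrk hW'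
  have h'' := hE.deg_nonpos_of_summand hdegE hsub hcompl hrk hW''
  omega
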